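/- arXiv:1403.7460 — 6 statements merged into one kernel-verified Lean document; each statement's English description precedes it below -/
import Mathlib

section
/- For letters a_0, a_1 and any natural numbers k, l, the shuffle product of a_1^k with the word a_1^l·a_0 satisfies: a_1^k ⧢ (a_1^l a_0) = Σ_{m=0}^{k} binomial(l+m, m) · a_1^{l+m} a_0 a_1^{k-m}, where powers denote concatenation powers. -/
/-- The shuffle product of two words, as a multiset of words (with multiplicities). -/
def shuffles {α : Type*} : List α → List α → Multiset (List α)
  | [], w => {w}
  | a :: v, [] => {a :: v}
  | a :: v, b :: w =>
      ((shuffles v (b :: w)).map (a :: ·)) + ((shuffles (a :: v) w).map (b :: ·))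

lemma map_cons_sum (a : Fin 2) (s : Finset ℕ) (c : ℕ → ℕ) (w : ℕ → List (Fin 2)) :
    Multiset.map (a :: ·) (∑ m ∈ s, c m • ({w m} : Multiset (List (Fin 2)))) =
      ∑ m ∈ s, c m • ({a :: w m} : Multiset (List (Fin 2))) := by
  rw [show Multiset.map ((a :: ·) : List (Fin 2) → List (Fin 2)) =
      ⇑(Multiset.mapAddMonoidHom ((a :: ·) : List (Fin 2) → List (Fin 2))) from rfl, map_sum]
  refine Finset.sum_congr rfl fun m _ => ?_
  simp [Multiset.map_nsmul]


/-- With letters `a₀ = 0`, `a₁ = 1` in `Fin 2`: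
`a₁^k ⧢ (a₁^l a₀) = ∑_{m=0}^{k} C(l+m, m) · a₁^{l+m} a₀ a₁^{k-m}`. -/
theorem stmt1 (k l : ℕ) :
    shuffles (List.replicate k (1 : Fin 2)) (List.replicate l (1 : Fin 2) ++ [(0 : Fin 2)]) =
      ∑ m ∈ Finset.range (k + 1),
        ((l + m).choose m) •
          ({List.replicate (l + m) (1 : Fin 2) ++ (0 : Fin 2) :: List.replicate (k - m) (1 : Fin 2)}
            : Multiset (List (Fin 2))) := by
  induction k generalizing l with
  | zero => simp [shuffles]
  | succ k ihk =>
    induction l with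
    | zero =>
      rw [List.replicate_succ, List.replicate_zero, List.nil_append]
      rw [show ([(0:Fin 2)] : List (Fin 2)) = (0:Fin 2) :: [] from rfl]
      rw [shuffles]
      rw [show ((0:Fin 2) :: [] : List (Fin 2)) = List.replicate 0 (1:Fin 2) ++ [0] from rfl,
        ihk 0, map_cons_sum]
      rw [shuffles, Finset.sum_range_succ' (n := k + 1)]
      congr 1
      · apply Finset.sum_congr rfl
        intro m hm
        simp [List.replicate_succ, Nat.succ_sub_succ]

    | succ l ihl =>
      rw [List.replicate_succ (n := k), List.replicate_succ (n := l), List.cons_append]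
      rw [shuffles]
      have e1 : (1 : Fin 2) :: (List.replicate l (1:Fin 2) ++ [0]) =
          List.replicate (l+1) (1:Fin 2) ++ [0] := by simp [List.replicate_succ]
      have e2 : (1 : Fin 2) :: List.replicate k (1:Fin 2) = List.replicate (k+1) (1:Fin 2) := by
        simp [List.replicate_succ]
      rw [e1, ihk (l+1), e2, ihl, map_cons_sum, map_cons_sum]
      rw [Finset.sum_range_succ' (n := k + 1), Finset.sum_range_succ' (n := k + 1)]
      have pascal : ∀ m : ℕ, (l + 1 + (m + 1)).choose (m + 1)
          = (l + 1 + m).choose m + (l + (m + 1)).choose (m + 1) := by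
        intro m
        rw [show l + 1 + (m + 1) = (l + 1 + m) + 1 from by ring, Nat.choose_succ_succ,
          show l + 1 + m = l + (m + 1) from by ring]
      conv_rhs =>
        rw [Finset.sum_congr rfl (fun m _ => by rw [pascal m, add_smul])]
      rw [Finset.sum_add_distrib]
      have hA : ∑ m ∈ Finset.range (k + 1),
            ((l + 1 + m).choose m) •
              ({List.replicate (l + 1 + (m + 1)) (1:Fin 2) ++
                (0:Fin 2) :: List.replicate (k + 1 - (m + 1)) (1:Fin 2)} : Multiset (List (Fin 2)))
          = ∑ m ∈ Finset.range (k + 1),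
            ((l + 1 + m).choose m) •
              ({(1:Fin 2) :: (List.replicate (l + 1 + m) (1:Fin 2) ++
                (0:Fin 2) :: List.replicate (k - m) (1:Fin 2))} : Multiset (List (Fin 2))) := by
        apply Finset.sum_congr rfl
        intro m hm
        rw [show l + 1 + (m + 1) = (l + 1 + m) + 1 from by ring, List.replicate_succ,
          Nat.succ_sub_succ, List.cons_append]
      have hB : ∑ m ∈ Finset.range (k + 1),
            ((l + (m + 1)).choose (m + 1)) •
              ({List.replicate (l + 1 + (m + 1)) (1:Fin 2) ++
                (0:Fin 2) :: List.replicate (k + 1 - (m + 1)) (1:Fin 2)} : Multiset (List (Fin 2)))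
          = ∑ m ∈ Finset.range (k + 1),
            ((l + (m + 1)).choose (m + 1)) •
              ({(1:Fin 2) :: (List.replicate (l + (m + 1)) (1:Fin 2) ++
                (0:Fin 2) :: List.replicate (k + 1 - (m + 1)) (1:Fin 2))} : Multiset (List (Fin 2))) := by
        apply Finset.sum_congr rfl
        intro m hm
        rw [show l + 1 + (m + 1) = (l + (m + 1)) + 1 from by ring, List.replicate_succ,
          List.cons_append]
      rw [hA, hB]
      simp only [Nat.add_zero, Nat.choose_zero_right, one_smul]
      simp only [List.replicate_succ, List.cons_append]
      abel
end

section
/- In the algebra of noncommutative formal power series on two letters a_0, a_1, the identity Σ_{k=0}^∞ a_0 a_1^k = Σ_{k,l=0}^∞ (-1)^l · a_1^k ⧢ (a_1^l a_0) holds. -/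
section Shuffles

variable {α : Type*}

@[simp]
lemma shuffles_nil_left (w : List α) : shuffles [] w = {w} := by
  rw [shuffles]

@[simp]
lemma shuffles_nil_right (u : List α) : shuffles u [] = {u} := by
  cases u <;> rw [shuffles]

lemma perm_append_of_mem_shuffles :
    ∀ {u v w : List α}, w ∈ shuffles u v → w.Perm (u ++ v)
  | [], v, w, h => by simp_all
  | a :: u, [], w, h => by simp_all
  | a :: u, b :: v, w, h => by
      rw [shuffles] at h
      simp only [Multiset.mem_add, Multiset.mem_map] at h
      rcases h with ⟨w', h', rfl⟩ | ⟨w', h', rfl⟩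
      · exact (perm_append_of_mem_shuffles h').cons a
      · exact ((perm_append_of_mem_shuffles h').cons b).trans List.perm_middle.symm
  termination_by u v => u.length + v.length

lemma count_cons_map_cons [DecidableEq α] (a c : α) (w : List α) (s : Multiset (List α)) :
    (s.map (a :: ·)).count (c :: w) = if c = a then s.count w else 0 := by
  split_ifs with h
  · subst h
    exact Multiset.count_map_eq_count' _ _ List.cons_injective _
  · refine Multiset.count_eq_zero_of_notMem ?_
    simp only [Multiset.mem_map, List.cons.injEq, not_exists, not_and]
    exact fun _ _ hac _ => h hac.symm

lemma count_cons_shuffles_cons [DecidableEq α] (a b c : α) (u v w : List α) :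
    (shuffles (a :: u) (b :: v)).count (c :: w) =
      (if c = a then (shuffles u (b :: v)).count w else 0) +
        if c = b then (shuffles (a :: u) v).count w else 0 := by
  rw [shuffles, Multiset.count_add, count_cons_map_cons, count_cons_map_cons]

end Shuffles

section TwoLetters

variable {α : Type*} {a b : α}

lemma replicate_append_cons_replicate_inj (hab : a ≠ b) {i j i' j' : ℕ} :
    List.replicate i b ++ a :: List.replicate j b =
        List.replicate i' b ++ a :: List.replicate j' b ↔ i = i' ∧ j = j' := by
  induction i generalizing i' with
  | zero => cases i' <;> simp [List.replicate_succ, hab, List.replicate_inj]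
  | succ i ih => cases i' <;> simp [List.replicate_succ, hab.symm, ih]

lemma count_shuffles_replicate [DecidableEq α] (hab : a ≠ b) : ∀ k l i j : ℕ,
    (shuffles (List.replicate k b) (List.replicate l b ++ [a])).count
        (List.replicate i b ++ a :: List.replicate j b) =
      if i + j = k + l then i.choose l else 0
  | 0, l, i, j => by
      have hsingle : [a] = a :: List.replicate 0 b := rfl
      simp only [List.replicate_zero, shuffles_nil_left, Multiset.count_singleton, hsingle,
        replicate_append_cons_replicate_inj hab]
      split_ifs with h h' h'
      · rw [h.1, Nat.choose_self]
      · omega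
      · rw [Nat.choose_eq_zero_of_lt (by omega)]
      · rfl
  | k + 1, 0, 0, j => by
      rw [List.replicate_zero, List.nil_append, List.nil_append, List.replicate_succ,
        count_cons_shuffles_cons, if_neg hab, if_pos rfl, zero_add, shuffles_nil_right,
        ← List.replicate_succ, Multiset.count_singleton]
      simp [List.replicate_inj]
  | k + 1, l + 1, 0, j => by
      simp [List.replicate_succ, count_cons_shuffles_cons, hab]
  | k + 1, 0, i + 1, j => by
      have ih := count_shuffles_replicate hab k 0 i j
      simp only [List.replicate_zero, List.nil_append, Nat.choose_zero_right, add_zero] at ih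
      simp only [List.replicate_succ, List.cons_append, count_cons_shuffles_cons,
        if_neg hab.symm, add_zero, List.nil_append, List.replicate_zero, Nat.choose_zero_right, ih,
        if_true]
      split_ifs <;> omega
  | k + 1, l + 1, i + 1, j => by
      simp only [List.replicate_succ, List.cons_append, count_cons_shuffles_cons, if_true]
      rw [← List.cons_append, ← List.replicate_succ, ← List.replicate_succ,
        count_shuffles_replicate hab k (l + 1) i j, count_shuffles_replicate hab (k + 1) l i j,
        Nat.choose_succ_succ']
      split_ifs <;> omega

end TwoLetters

lemma exists_eq_replicate_append_cons_replicate {w : List (Fin 2)} (hw : w.count 0 = 1) :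
    ∃ i j, w = List.replicate i 1 ++ 0 :: List.replicate j 1 := by
  obtain ⟨s, t, rfl⟩ := List.append_of_mem (List.count_pos_iff.1 (by omega : 0 < w.count 0))
  have hst : s.count 0 = 0 ∧ t.count 0 = 0 := by
    simp only [List.count_append, List.count_cons_self] at hw
    omega
  have eq_replicate (x : List (Fin 2)) (hx : x.count 0 = 0) : x = List.replicate x.length 1 :=
    List.eq_replicate_iff.2 ⟨rfl, fun y hy => y.eq_one_of_ne_zero
      fun hy0 => List.count_eq_zero.1 hx (hy0 ▸ hy)⟩
  exact ⟨s.length, t.length, by rw [← eq_replicate s hst.1, ← eq_replicate t hst.2]⟩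

lemma count_shuffles_eq_zero_of_count_ne {α : Type*} [DecidableEq α] {u v w : List α} {a : α}
    (h : w.count a ≠ (u ++ v).count a) : (shuffles u v).count w = 0 :=
  Multiset.count_eq_zero_of_notMem fun hw => h ((perm_append_of_mem_shuffles hw).count_eq a)

open Finset in
lemma sum_antidiagonal_neg_one_pow_mul_choose {R : Type*} [Ring R] {i n : ℕ} (h : i ≤ n) :
    ∑ p ∈ antidiagonal n, (-1 : R) ^ p.2 * i.choose p.2 = if i = 0 then 1 else 0 := by
  rw [← Nat.sum_antidiagonal_swap, Nat.sum_antidiagonal_eq_sum_range_succ_mk]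
  simp only [Prod.swap_prod_mk]
  rw [← sum_subset (range_subset_range.2 (by omega : i + 1 ≤ n.succ)) fun l _ hl => by
    rw [Nat.choose_eq_zero_of_lt (by simpa using hl), Nat.cast_zero, mul_zero]]
  have h := congrArg (Int.cast : ℤ → R) (Int.alternating_sum_range_choose (n := i))
  push_cast at h
  rw [h]

open Classical in
/-- The coefficients of `w` on both sides, with letters `a₀ = 0`, `a₁ = 1`: only the pairs
`(k, l)` with `k + l + 1 = |w|` can contribute, hence the sum over the antidiagonal. -/
theorem stmt2 (w : List (Fin 2)) :
    (if ∃ k, w = (0 : Fin 2) :: List.replicate k 1 then (1 : ℝ) else 0) =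
      ∑ p ∈ Finset.HasAntidiagonal.antidiagonal (w.length - 1),
        (-1 : ℝ) ^ p.2 *
          (Multiset.count w
            (shuffles (List.replicate p.1 (1 : Fin 2))
              (List.replicate p.2 (1 : Fin 2) ++ [(0 : Fin 2)])) : ℝ) := by
  by_cases hw : w.count 0 = 1
  · obtain ⟨i, j, rfl⟩ := exists_eq_replicate_append_cons_replicate hw
    have hlhs : (∃ k, List.replicate i (1 : Fin 2) ++ 0 :: List.replicate j 1 =
        0 :: List.replicate k 1) ↔ i = 0 := by
      refine ⟨fun ⟨k, hk⟩ => ?_, fun hi => ⟨j, by rw [hi]; rfl⟩⟩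
      exact ((replicate_append_cons_replicate_inj (i' := 0) (j' := k) zero_ne_one).1 hk).1
    have hlen : (List.replicate i (1 : Fin 2) ++ 0 :: List.replicate j 1).length - 1 = i + j := by
      simp
    rw [if_congr hlhs rfl rfl, hlen,
      ← sum_antidiagonal_neg_one_pow_mul_choose (R := ℝ) (Nat.le_add_right i j)]
    refine Finset.sum_congr rfl fun p hp => ?_
    rw [Finset.HasAntidiagonal.mem_antidiagonal] at hp
    rw [count_shuffles_replicate zero_ne_one, if_pos hp.symm]
  · have hlhs : ¬ ∃ k, w = (0 : Fin 2) :: List.replicate k 1 := by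
      rintro ⟨k, rfl⟩
      simp [List.count_replicate] at hw
    rw [if_neg hlhs, eq_comm]
    refine Finset.sum_eq_zero fun p _ => ?_
    rw [count_shuffles_eq_zero_of_count_ne (a := 0) (by simpa [List.count_replicate] using hw)]
    simp
end

section
/- The number of planar rooted full n-ary increasingly labeled trees on k parent vertices equals the product ((n−1)(k−1)+1)·((n−1)(k−2)+1)···((n−1)·1+1)·n for k ≥ 1, and equals 1 for k = 0. -/
/-!
Removing the parent vertex with the largest label `k + 1` from a tree in `T(n, k + 1)` leaves a
tree in `T(n, k)` together with the leaf where that vertex sat; conversely, a new top-labeled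
parent can be grafted onto any leaf. So `T(n, k + 1)` is in bijection with the pairs (tree in
`T(n, k)`, leaf of it). A full `n`-ary tree with `k` parents has `(n - 1) k + 1` leaves, so
`|T(n, k + 1)| = |T(n, k)| · ((n - 1) k + 1)`, and the product formula follows by induction.
-/

/-- Planar rooted full `n`-ary trees: each vertex has either no children (a leaf)
or exactly `n` (ordered) children (a parent vertex). -/
inductive NTree (n : ℕ) : Type
  | leaf : NTree n
  | node : (Fin n → NTree n) → NTree n

/-- The number of parent (internal) vertices of a tree. -/
def NTree.internals {n : ℕ} : NTree n → ℕ
  | .leaf => 0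
  | .node f => 1 + ∑ i, (f i).internals

/-- A position (path from the root) is an internal (parent) vertex of the tree. -/
def NTree.isInternal {n : ℕ} : NTree n → List (Fin n) → Prop
  | .leaf, _ => False
  | .node _, [] => True
  | .node f, i :: p => (f i).isInternal p

/-- An element of `T(n,k)`: a planar rooted full `n`-ary tree with exactly `k` parent
vertices, whose parent vertices are labeled bijectively by `{1, …, k}` (here `Fin k`) with
labels strictly increasing along every branch from the root. -/
structure LabeledTree (n k : ℕ) where
  tree : NTree n
  internals_eq : tree.internals = k
  label : {p : List (Fin n) // tree.isInternal p} → Fin k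
  bij : Function.Bijective label
  incr : ∀ p q : {p : List (Fin n) // tree.isInternal p},
    p.1 <+: q.1 → p.1 ≠ q.1 → label p < label q

namespace NTree

variable {n : ℕ}

def isLeaf : NTree n → List (Fin n) → Prop
  | .leaf, [] => True
  | .leaf, _ :: _ => False
  | .node _, [] => False
  | .node f, i :: p => (f i).isLeaf p

def graft : NTree n → List (Fin n) → NTree n
  | _, [] => .node fun _ => .leaf
  | .leaf, _ :: _ => .leaf
  | .node f, i :: p => .node (Function.update f i ((f i).graft p))

def prune : NTree n → List (Fin n) → NTree n
  | _, [] => .leaf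
  | .leaf, _ :: _ => .leaf
  | .node f, i :: p => .node (Function.update f i ((f i).prune p))

@[simp] lemma isLeaf_leaf_nil : (leaf : NTree n).isLeaf [] := trivial
@[simp] lemma not_isLeaf_leaf_cons (i : Fin n) (p : List (Fin n)) :
    ¬ (leaf : NTree n).isLeaf (i :: p) := id
@[simp] lemma not_isLeaf_node_nil (f : Fin n → NTree n) : ¬ (node f).isLeaf [] := id
@[simp] lemma isLeaf_node_cons (f : Fin n → NTree n) (i : Fin n) (p : List (Fin n)) :
    (node f).isLeaf (i :: p) ↔ (f i).isLeaf p := Iff.rfl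
@[simp] lemma not_isInternal_leaf (p : List (Fin n)) : ¬ (leaf : NTree n).isInternal p := id
@[simp] lemma isInternal_node_nil (f : Fin n → NTree n) : (node f).isInternal [] := trivial
@[simp] lemma isInternal_node_cons (f : Fin n → NTree n) (i : Fin n) (p : List (Fin n)) :
    (node f).isInternal (i :: p) ↔ (f i).isInternal p := Iff.rfl

lemma not_isInternal_of_isLeaf_of_prefix {t : NTree n} {p q : List (Fin n)}
    (hp : t.isLeaf p) (hpq : p <+: q) : ¬ t.isInternal q := by
  induction t generalizing p q with
  | leaf => simp
  | node f ih =>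
    cases p with
    | nil => simp at hp
    | cons i p =>
      obtain ⟨r, rfl⟩ := hpq
      exact ih i hp ⟨r, rfl⟩

lemma not_isInternal_of_isLeaf {t : NTree n} {p : List (Fin n)} (hp : t.isLeaf p) :
    ¬ t.isInternal p :=
  not_isInternal_of_isLeaf_of_prefix hp (List.prefix_refl p)

lemma internals_graft {t : NTree n} {p : List (Fin n)} (hp : t.isLeaf p) :
    (t.graft p).internals = t.internals + 1 := by
  induction t generalizing p with
  | leaf =>
    cases p with
    | nil => simp [graft, internals]
    | cons i p => simp at hp
  | node f ih =>
    cases p with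
    | nil => simp at hp
    | cons i p =>
      have hsum := Finset.add_sum_erase Finset.univ (fun j => (f j).internals) (Finset.mem_univ i)
      simp only [graft, internals, Function.apply_update (fun _ => NTree.internals),
        Finset.sum_update_of_mem (Finset.mem_univ i), ih i hp, Finset.sdiff_singleton_eq_erase]
      omega

lemma isInternal_graft {t : NTree n} {p : List (Fin n)} (hp : t.isLeaf p) (q : List (Fin n)) :
    (t.graft p).isInternal q ↔ t.isInternal q ∨ q = p := by
  induction t generalizing p q with
  | leaf =>
    cases p with
    | nil => cases q <;> simp [graft]
    | cons i p => simp at hp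
  | node f ih =>
    cases p with
    | nil => simp at hp
    | cons i p =>
      cases q with
      | nil => simp [graft]
      | cons j q =>
        by_cases hji : j = i
        · subst hji
          simpa [graft] using ih j hp q
        · simp [graft, hji]

lemma prune_graft {t : NTree n} {p : List (Fin n)} (hp : t.isLeaf p) :
    (t.graft p).prune p = t := by
  induction t generalizing p with
  | leaf =>
    cases p with
    | nil => rfl
    | cons i p => simp at hp
  | node f ih =>
    cases p with
    | nil => simp at hp
    | cons i p =>
      simp only [graft, prune, Function.update_self, ih i hp, Function.update_idem,
        Function.update_eq_self]

lemma isLeaf_prune {t : NTree n} {p : List (Fin n)} (hp : t.isInternal p) :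
    (t.prune p).isLeaf p := by
  induction t generalizing p with
  | leaf => simp at hp
  | node f ih =>
    cases p with
    | nil => simp [prune]
    | cons i p => simpa [prune] using ih i hp

lemma graft_prune {t : NTree n} {p : List (Fin n)} (hp : t.isInternal p)
    (hmax : ∀ i, ¬ t.isInternal (p ++ [i])) : (t.prune p).graft p = t := by
  induction t generalizing p with
  | leaf => simp at hp
  | node f ih =>
    cases p with
    | nil =>
      simp only [prune, graft, node.injEq]
      funext i
      cases hfi : f i with
      | leaf => rfl
      | node g => simpa [hfi] using hmax i
    | cons i p =>
      simp only [prune, graft, Function.update_self, ih i hp (hmax ·), Function.update_idem,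
        Function.update_eq_self]

lemma isInternal_prune {t : NTree n} {p : List (Fin n)} (hp : t.isInternal p)
    (hmax : ∀ i, ¬ t.isInternal (p ++ [i])) (q : List (Fin n)) :
    (t.prune p).isInternal q ↔ t.isInternal q ∧ q ≠ p := by
  conv_rhs => rw [← graft_prune hp hmax, isInternal_graft (isLeaf_prune hp)]
  have := not_isInternal_of_isLeaf (isLeaf_prune hp)
  constructor
  · rintro hq
    exact ⟨Or.inl hq, by rintro rfl; exact this hq⟩
  · rintro ⟨hq | hq, hne⟩
    exacts [hq, absurd hq hne]

abbrev LeafPos (t : NTree n) : Type := {p : List (Fin n) // t.isLeaf p}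

def leafPosLeafEquiv : (leaf : NTree n).LeafPos ≃ Unit where
  toFun _ := ()
  invFun _ := ⟨[], trivial⟩
  left_inv
    | ⟨[], _⟩ => rfl
    | ⟨_ :: _, hp⟩ => by simp at hp
  right_inv _ := rfl

def leafPosNodeEquiv (f : Fin n → NTree n) : (node f).LeafPos ≃ Σ i, (f i).LeafPos where
  toFun
    | ⟨[], hp⟩ => absurd hp (by simp)
    | ⟨i :: q, hp⟩ => ⟨i, q, hp⟩
  invFun x := ⟨x.1 :: x.2.1, x.2.2⟩
  left_inv
    | ⟨[], hp⟩ => by simp at hp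
    | ⟨_ :: _, _⟩ => rfl
  right_inv _ := rfl

instance (t : NTree n) : Finite t.LeafPos := by
  induction t with
  | leaf => exact .of_equiv _ leafPosLeafEquiv.symm
  | node f _ => exact .of_equiv _ (leafPosNodeEquiv f).symm

lemma card_leafPos (t : NTree n) :
    (Nat.card t.LeafPos : ℤ) = ((n : ℤ) - 1) * t.internals + 1 := by
  induction t with
  | leaf => simp [Nat.card_congr leafPosLeafEquiv, internals]
  | node f ih =>
    simp only [Nat.card_congr (leafPosNodeEquiv f), Nat.card_sigma, internals, Nat.cast_sum, ih,
      Finset.sum_add_distrib, ← Finset.mul_sum, Finset.sum_const, Finset.card_univ,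
      Fintype.card_fin, nsmul_eq_mul, mul_one]
    push_cast
    ring

end NTree

namespace LabeledTree

open NTree

variable {n k : ℕ}

lemma ext {a b : LabeledTree n k} (htree : a.tree = b.tree)
    (hlabel : ∀ p (ha : a.tree.isInternal p) (hb : b.tree.isInternal p),
      a.label ⟨p, ha⟩ = b.label ⟨p, hb⟩) : a = b := by
  obtain ⟨t, _, l, _, _⟩ := a
  obtain ⟨_, _, l', _, _⟩ := b
  subst htree
  obtain rfl : l = l' := funext fun q => hlabel q.1 q.2 q.2
  rfl

def push (t : LabeledTree n k) (p : t.tree.LeafPos) : LabeledTree n (k + 1) where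
  tree := t.tree.graft p.1
  internals_eq := by rw [internals_graft p.2, t.internals_eq]
  label q := if h : q.1 = p.1 then Fin.last k
    else (t.label ⟨q.1, ((isInternal_graft p.2 q.1).mp q.2).resolve_right h⟩).castSucc
  bij := by
    constructor
    · rintro ⟨a, ha⟩ ⟨b, hb⟩ hab
      by_cases hap : a = p.1 <;> by_cases hbp : b = p.1 <;>
        simp only [hap, hbp, dite_true, dite_false] at hab
      · exact Subtype.ext (hap.trans hbp.symm)
      · exact absurd hab (Fin.castSucc_lt_last _).ne'
      · exact absurd hab (Fin.castSucc_lt_last _).ne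
      · have := t.bij.1 (Fin.castSucc_injective k hab)
        exact Subtype.ext (Subtype.mk_eq_mk.mp this)
    · intro y
      induction y using Fin.lastCases with
      | last => exact ⟨⟨p.1, (isInternal_graft p.2 p.1).mpr (Or.inr rfl)⟩, by simp⟩
      | cast y =>
        obtain ⟨q, rfl⟩ := t.bij.2 y
        have hqp : q.1 ≠ p.1 := fun h => not_isInternal_of_isLeaf p.2 (h ▸ q.2)
        exact ⟨⟨q.1, (isInternal_graft p.2 q.1).mpr (Or.inl q.2)⟩, by simp [hqp]⟩
  incr := by
    rintro ⟨a, ha⟩ ⟨b, hb⟩ hab hne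
    have hap : a ≠ p.1 := by
      intro hap
      have hbp : b ≠ p.1 := fun h => hne (hap.trans h.symm)
      exact not_isInternal_of_isLeaf_of_prefix p.2 (hap ▸ hab)
        (((isInternal_graft p.2 b).mp hb).resolve_right hbp)
    by_cases hbp : b = p.1
    · simp [hap, hbp]
    · simpa [hap, hbp] using t.incr _ _ hab hne

noncomputable def topVertex (u : LabeledTree n (k + 1)) : {p // u.tree.isInternal p} :=
  (Equiv.ofBijective _ u.bij).symm (Fin.last k)

lemma label_topVertex (u : LabeledTree n (k + 1)) : u.label u.topVertex = Fin.last k :=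
  (Equiv.ofBijective _ u.bij).apply_symm_apply _

lemma not_isInternal_topVertex_append (u : LabeledTree n (k + 1)) (i : Fin n) :
    ¬ u.tree.isInternal (u.topVertex.1 ++ [i]) := fun h =>
  (u.incr u.topVertex ⟨_, h⟩ (List.prefix_append _ _) (by simp)).not_ge
    (u.label_topVertex ▸ Fin.le_last _)

lemma isInternal_prune_topVertex (u : LabeledTree n (k + 1)) (q : List (Fin n)) :
    (u.tree.prune u.topVertex.1).isInternal q ↔ u.tree.isInternal q ∧ q ≠ u.topVertex.1 :=
  isInternal_prune u.topVertex.2 u.not_isInternal_topVertex_append q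

lemma label_ne_last (u : LabeledTree n (k + 1)) {q : List (Fin n)} (hq : u.tree.isInternal q)
    (hne : q ≠ u.topVertex.1) : u.label ⟨q, hq⟩ ≠ Fin.last k := fun h =>
  hne (congrArg Subtype.val (u.bij.1 (h.trans u.label_topVertex.symm)))

noncomputable def pop (u : LabeledTree n (k + 1)) : LabeledTree n k where
  tree := u.tree.prune u.topVertex.1
  internals_eq := by
    have h := internals_graft (isLeaf_prune u.topVertex.2)
    rw [graft_prune u.topVertex.2 u.not_isInternal_topVertex_append, u.internals_eq] at h
    omega
  label q :=
    have hq := (u.isInternal_prune_topVertex q.1).mp q.2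
    (u.label ⟨q.1, hq.1⟩).castPred (u.label_ne_last hq.1 hq.2)
  bij := by
    constructor
    · intro a b hab
      have := u.bij.1 (Fin.castPred_inj.mp hab)
      exact Subtype.ext (Subtype.mk_eq_mk.mp this)
    · intro y
      obtain ⟨q, hq⟩ := u.bij.2 y.castSucc
      have hne : q.1 ≠ u.topVertex.1 := by
        intro h
        rw [Subtype.ext h, label_topVertex] at hq
        exact (Fin.castSucc_lt_last y).ne hq.symm
      exact ⟨⟨q.1, (u.isInternal_prune_topVertex q.1).mpr ⟨q.2, hne⟩⟩,
        Fin.castSucc_injective k (by simpa using hq)⟩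
  incr a b hab hne := Fin.castPred_lt_castPred_iff.mpr (u.incr _ _ hab hne)

lemma push_pop (u : LabeledTree n (k + 1)) :
    u.pop.push ⟨u.topVertex.1, isLeaf_prune u.topVertex.2⟩ = u := by
  refine ext (graft_prune u.topVertex.2 u.not_isInternal_topVertex_append) fun q hq hq' => ?_
  by_cases h : q = u.topVertex.1
  · subst h
    simpa [push] using u.label_topVertex.symm
  · simp [push, pop, h]

lemma topVertex_push (t : LabeledTree n k) (p : t.tree.LeafPos) :
    (t.push p).topVertex.1 = p.1 := by
  have hp : (t.push p).tree.isInternal p.1 := (isInternal_graft p.2 p.1).mpr (Or.inr rfl)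
  have : (t.push p).label ⟨p.1, hp⟩ = Fin.last k := by simp [push]
  exact congrArg Subtype.val ((t.push p).bij.1 ((t.push p).label_topVertex.trans this.symm))

lemma pop_push (t : LabeledTree n k) (p : t.tree.LeafPos) : (t.push p).pop = t := by
  refine ext (by simp only [pop, topVertex_push]; exact prune_graft p.2) fun q hq hq' => ?_
  have hqp : q ≠ p.1 := fun h => not_isInternal_of_isLeaf p.2 (h ▸ hq')
  simp [pop, push, hqp]

noncomputable def succEquiv : LabeledTree n (k + 1) ≃ Σ t : LabeledTree n k, t.tree.LeafPos where
  toFun u := ⟨u.pop, u.topVertex.1, isLeaf_prune u.topVertex.2⟩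
  invFun x := x.1.push x.2
  left_inv := push_pop
  right_inv x := Sigma.subtype_ext (pop_push x.1 x.2) (topVertex_push x.1 x.2)

def leaf : LabeledTree n 0 where
  tree := .leaf
  internals_eq := rfl
  label q := absurd q.2 (not_isInternal_leaf _)
  bij := ⟨fun q => absurd q.2 (not_isInternal_leaf _), fun y => y.elim0⟩
  incr q := absurd q.2 (not_isInternal_leaf _)

lemma eq_leaf (u : LabeledTree n 0) : u = leaf := by
  have htree : u.tree = .leaf := by
    cases h : u.tree with
    | leaf => rfl
    | node f => simpa [h, internals] using u.internals_eq
  exact ext htree fun _ _ hq => absurd hq (not_isInternal_leaf _)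

instance : Unique (LabeledTree n 0) := ⟨⟨leaf⟩, eq_leaf⟩

instance (k : ℕ) : Finite (LabeledTree n k) := by
  induction k with
  | zero => infer_instance
  | succ k _ => exact .of_equiv _ succEquiv.symm

lemma card_succ (k : ℕ) : (Nat.card (LabeledTree n (k + 1)) : ℤ)
    = Nat.card (LabeledTree n k) * (((n : ℤ) - 1) * k + 1) := by
  have := Fintype.ofFinite (LabeledTree n k)
  simp [Nat.card_congr succEquiv, Nat.card_sigma, card_leafPos, internals_eq, mul_comm]

lemma card_eq_prod (k : ℕ) :
    (Nat.card (LabeledTree n k) : ℤ) = ∏ j ∈ Finset.range k, (((n : ℤ) - 1) * j + 1) := by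
  induction k with
  | zero => simp
  | succ k ih => rw [card_succ, ih, Finset.prod_range_succ]

end LabeledTree

/-- `|T(n,k)| = ((n-1)(k-1)+1)·((n-1)(k-2)+1)⋯((n-1)·1+1)·((n-1)·0+1)
  = ∏_{j=0}^{k-1} ((n-1)j+1)` for `k ≥ 1`, and `|T(n,0)| = 1`. -/
theorem stmt8 (n k : ℕ) :
    (1 ≤ k → (Nat.card (LabeledTree n k) : ℤ)
      = ∏ j ∈ Finset.range k, (((n : ℤ) - 1) * j + 1)) ∧
    Nat.card (LabeledTree n 0) = 1 :=
  ⟨fun _ => LabeledTree.card_eq_prod k, Nat.card_unique⟩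
end

section
/- Let F = Σ_k F_k be the unique solution of F = Σ_{i=1}^n C(n,i)·F^{⧢ i}·a_i + a_0 in noncommutative series on {a_0,...,a_n}, where F_k is the degree-k homogeneous part. Then the total coefficient mass ‖F_k‖ = Σ_v |⟨F_k, v⟩| equals ((n−1)(k−1)+1)·((n−1)(k−2)+1)···n for k ≥ 1, ‖F_1‖ = 1, and ‖F_0‖ = 0. In particular, for n=2, ‖F_k‖ = k!; for n=3, ‖F_k‖ = (2k−1)!!. -/
/-- The subword of `w` consisting of the positions in `s` (in order). -/
def extract {α : Type*} (w : List α) (s : Finset ℕ) : List α :=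
  (w.zipIdx.filter fun p => p.2 ∈ s).map Prod.fst

/-- The coefficient of a word `w` in the shuffle product of two noncommutative series. -/
noncomputable def shuffleCoeff {α : Type*} (S T : List α → ℝ) (w : List α) : ℝ :=
  ∑ s ∈ (Finset.range w.length).powerset,
    S (extract w s) * T (extract w (Finset.range w.length \ s))

/-- Coefficients of the `i`-fold shuffle power `S^{⧢ i}` of a series. -/
noncomputable def shufflePowCoeff {α : Type*} [DecidableEq α] (S : List α → ℝ) :
    ℕ → List α → ℝ
  | 0 => fun w => if w = [] then 1 else 0
  | k + 1 => shuffleCoeff S (shufflePowCoeff S k)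

/-!
All coefficients of `F` are nonnegative, so `‖F_k‖` is the plain sum of the coefficients of the
words of length `k`. Summing coefficients over words turns a shuffle product into a binomial
convolution, i.e. the exponential generating function `Φ S = ∑ₖ (∑_{|w| = k} ⟨S, w⟩) Xᵏ / k!`
is multiplicative on shuffles, and deleting the last letter of the words differentiates it.
Hence `g = 1 + Φ F` solves `g' = gⁿ`, `g(0) = 1`. Then `(gᵐ)' = m g^(m + n - 1)`, so the `k`-th
derivative of `gᵐ` at `0` is `m (m + (n - 1)) ⋯ (m + (k - 1)(n - 1))`; take `m = 1`.
-/

open Finset PowerSeries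
open scoped Nat

section Shuffle

variable {α : Type*}

theorem extract_cons_map_succ (a : α) (w : List α) (u : Finset ℕ) :
    extract (a :: w) (u.map (addRightEmbedding 1)) = extract w u := by
  simp only [extract, List.zipIdx_cons', List.filter_cons, List.filter_map]
  simp [Function.comp_def]

theorem extract_cons_insert_zero (a : α) (w : List α) (u : Finset ℕ) :
    extract (a :: w) (insert 0 (u.map (addRightEmbedding 1))) = a :: extract w u := by
  simp only [extract, List.zipIdx_cons', List.filter_cons, List.filter_map]
  simp [Function.comp_def]

theorem Finset.sum_powerset_map {β γ M : Type*} [AddCommMonoid M] (e : β ↪ γ) (s : Finset β)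
    (f : Finset γ → M) :
    ∑ t ∈ (s.map e).powerset, f t = ∑ u ∈ s.powerset, f (u.map e) := by
  have : (s.map e).powerset = s.powerset.map (mapEmbedding e).toEmbedding := by
    ext t
    simp [subset_map_iff, eq_comm]
  rw [this, sum_map]
  rfl

theorem shuffleCoeff_nil (S T : List α → ℝ) : shuffleCoeff S T [] = S [] * T [] := by
  simp [shuffleCoeff, extract]

theorem shuffleCoeff_cons (S T : List α → ℝ) (a : α) (w : List α) :
    shuffleCoeff S T (a :: w) =
      shuffleCoeff (fun u => S (a :: u)) T w + shuffleCoeff S (fun u => T (a :: u)) w := by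
  have hrange : range (w.length + 1) = insert 0 ((range w.length).map (addRightEmbedding 1)) := by
    ext (_ | _) <;> simp
  have hzero : 0 ∉ (range w.length).map (addRightEmbedding 1) := by simp
  rw [shuffleCoeff, List.length_cons, hrange, sum_powerset_insert hzero, sum_powerset_map,
    sum_powerset_map, add_comm]
  congr 1 <;> refine sum_congr rfl fun u _ => ?_
  · have : insert 0 ((range w.length).map (addRightEmbedding 1)) \
        insert 0 (u.map (addRightEmbedding 1)) = (range w.length \ u).map (addRightEmbedding 1) := by
      ext (_ | _) <;> simp
    rw [this, extract_cons_insert_zero, extract_cons_map_succ]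
  · have : insert 0 ((range w.length).map (addRightEmbedding 1)) \ u.map (addRightEmbedding 1) =
        insert 0 ((range w.length \ u).map (addRightEmbedding 1)) := by
      ext (_ | _) <;> simp
    rw [this, extract_cons_insert_zero, extract_cons_map_succ]

theorem length_extract_le (w : List α) (s : Finset ℕ) : (extract w s).length ≤ w.length :=
  (List.length_map _).trans_le ((List.length_filter_le _ _).trans_eq List.length_zipIdx)

theorem shuffleCoeff_nonneg {S T : List α → ℝ} {m : ℕ}
    (hS : ∀ u : List α, u.length ≤ m → 0 ≤ S u) (hT : ∀ u : List α, u.length ≤ m → 0 ≤ T u)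
    {w : List α} (hw : w.length ≤ m) : 0 ≤ shuffleCoeff S T w :=
  sum_nonneg fun _ _ => mul_nonneg (hS _ ((length_extract_le _ _).trans hw))
    (hT _ ((length_extract_le _ _).trans hw))

theorem shufflePowCoeff_nonneg [DecidableEq α] {S : List α → ℝ} {m : ℕ}
    (hS : ∀ u : List α, u.length ≤ m → 0 ≤ S u) (i : ℕ) {w : List α} (hw : w.length ≤ m) :
    0 ≤ shufflePowCoeff S i w := by
  induction i generalizing w with
  | zero => simp only [shufflePowCoeff]; positivity
  | succ i ih => exact shuffleCoeff_nonneg hS (fun _ => ih) hw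

end Shuffle

section WordSum

variable {α : Type*} [Fintype α]

noncomputable def wordSum (S : List α → ℝ) (k : ℕ) : ℝ :=
  ∑ f : Fin k → α, S (List.ofFn f)

theorem wordSum_zero (S : List α → ℝ) : wordSum S 0 = S [] := by
  simp [wordSum]

theorem wordSum_succ (S : List α → ℝ) (k : ℕ) :
    wordSum S (k + 1) = ∑ a, wordSum (fun u => S (a :: u)) k := by
  rw [wordSum, ← (Fin.consEquiv fun _ => α).sum_comp, Fintype.sum_prod_type]
  simp [wordSum, Fin.consEquiv, List.ofFn_succ]

theorem wordSum_succ' (S : List α → ℝ) (k : ℕ) :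
    wordSum S (k + 1) = wordSum (fun u => ∑ a, S (u ++ [a])) k := by
  rw [wordSum, ← (Fin.snocEquiv fun _ => α).sum_comp, Fintype.sum_prod_type, sum_comm]
  simp only [wordSum, Fin.snocEquiv, Equiv.coe_fn_mk, List.ofFn_succ', Fin.snoc_castSucc,
    Fin.snoc_last, List.concat_eq_append]

noncomputable def wordEgf : (List α → ℝ) →ₗ[ℝ] ℝ⟦X⟧ where
  toFun S := PowerSeries.mk fun k => wordSum S k / (k ! : ℝ)
  map_add' S T := by
    ext k
    simp [wordSum, sum_add_distrib, add_div]
  map_smul' c S := by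
    ext k
    simp [wordSum, ← mul_sum, mul_div_assoc]

theorem coeff_wordEgf (S : List α → ℝ) (k : ℕ) : coeff k (wordEgf S) = wordSum S k / k ! := by
  simp [wordEgf]

theorem constantCoeff_wordEgf (S : List α → ℝ) : constantCoeff (wordEgf S) = S [] := by
  rw [← coeff_zero_eq_constantCoeff_apply, coeff_wordEgf, wordSum_zero]
  simp

theorem coeff_derivative_wordEgf (S : List α → ℝ) (k : ℕ) :
    coeff k (d⁄dX ℝ (wordEgf S)) = wordSum S (k + 1) / k ! := by
  rw [coeff_derivative, coeff_wordEgf, Nat.factorial_succ]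
  push_cast
  field_simp

theorem derivative_wordEgf (S : List α → ℝ) :
    d⁄dX ℝ (wordEgf S) = ∑ a, wordEgf fun u => S (a :: u) := by
  ext k
  simp only [coeff_derivative_wordEgf, map_sum, coeff_wordEgf, wordSum_succ, sum_div]

theorem derivative_wordEgf' (S : List α → ℝ) :
    d⁄dX ℝ (wordEgf S) = wordEgf fun u => ∑ a, S (u ++ [a]) := by
  ext k
  rw [coeff_derivative_wordEgf, coeff_wordEgf, wordSum_succ']

theorem wordEgf_shuffleCoeff (S T : List α → ℝ) :
    wordEgf (shuffleCoeff S T) = wordEgf S * wordEgf T := by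
  ext k
  -- Deleting the first letter acts as `d⁄dX` on `wordEgf` and as a derivation on shuffles.
  induction k generalizing S T with
  | zero => simp [constantCoeff_wordEgf, shuffleCoeff_nil]
  | succ k ih =>
    have hcoeff (f : ℝ⟦X⟧) : coeff (k + 1) f = coeff k (d⁄dX ℝ f) / (k + 1) := by
      rw [coeff_derivative]
      field_simp
    have hcons (a : α) : (fun u => shuffleCoeff S T (a :: u)) =
        shuffleCoeff (fun u => S (a :: u)) T + shuffleCoeff S (fun u => T (a :: u)) :=
      funext (shuffleCoeff_cons S T a)
    rw [hcoeff, hcoeff, derivative_wordEgf, Derivation.leibniz, derivative_wordEgf,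
      derivative_wordEgf, smul_eq_mul, smul_eq_mul, mul_comm (wordEgf T)]
    simp only [hcons, map_add, map_sum, ih, mul_sum, sum_mul, sum_add_distrib]
    ring

theorem wordEgf_shufflePowCoeff [DecidableEq α] (S : List α → ℝ) (i : ℕ) :
    wordEgf (shufflePowCoeff S i) = wordEgf S ^ i := by
  induction i with
  | zero =>
    ext (_ | k)
    · simp [constantCoeff_wordEgf, shufflePowCoeff]
    · simp [coeff_wordEgf, wordSum, shufflePowCoeff, coeff_one]
  | succ i ih => rw [shufflePowCoeff, wordEgf_shuffleCoeff, ih, pow_succ']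

end WordSum

theorem factorial_mul_coeff_pow_of_derivative_eq_pow {R : Type*} [CommRing R] {g : R⟦X⟧}
    {n : ℕ} (hg₀ : constantCoeff g = 1) (hg : d⁄dX R g = g ^ n) (m k : ℕ) :
    k ! * coeff k (g ^ m) = ∏ l ∈ range k, (((n : R) - 1) * l + m) := by
  induction k generalizing m with
  | zero => simp [hg₀]
  | succ k ih =>
    rcases m with _ | m
    · simp [coeff_one, prod_range_succ']
    have hderiv : d⁄dX R (g ^ (m + 1)) = C (m + 1 : R) * g ^ (m + n) := by
      rw [derivative_pow, hg, Nat.add_sub_cancel, mul_assoc, ← pow_add, map_add, map_one,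
        map_natCast, Nat.cast_succ]
    have hcoeff : ((k + 1) ! : R) * coeff (k + 1) (g ^ (m + 1)) =
        k ! * coeff k (d⁄dX R (g ^ (m + 1))) := by
      rw [coeff_derivative, Nat.factorial_succ]
      push_cast
      ring
    rw [hcoeff, hderiv, coeff_C_mul, mul_left_comm, ih, prod_range_succ']
    push_cast
    rw [mul_comm]
    congr 1
    · exact prod_congr rfl fun l _ => by ring
    · ring

theorem Nat.prod_range_two_mul_add_one (k : ℕ) : ∏ j ∈ range k, (2 * j + 1) = (2 * k - 1)‼ := by
  rcases k with _ | k
  · rfl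
  · rw [prod_range_succ', show 2 * (k + 1) - 1 = 2 * k + 1 by omega,
      Nat.doubleFactorial_eq_prod_odd, mul_zero, zero_add, mul_one]

/-- `F = a₀ + ∑_{i=1}^n C(n,i) F^{⧢ i} aᵢ`, read off coefficientwise, with `aᵢ` the letter `i`. -/
def SolvesShuffleEquation (n : ℕ) (F : List (Fin (n + 1)) → ℝ) : Prop :=
  ∀ w : List (Fin (n + 1)),
    F w = (if w = [(0 : Fin (n + 1))] then 1 else 0) +
      ∑ i ∈ Finset.univ.erase (0 : Fin (n + 1)),
        (n.choose i.val : ℝ) *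
          (if w.getLast? = some i then shufflePowCoeff F i.val w.dropLast else 0)

namespace SolvesShuffleEquation

variable {n : ℕ} {F : List (Fin (n + 1)) → ℝ}

theorem apply_nil (hF : SolvesShuffleEquation n F) : F [] = 0 := by
  simp [hF []]

theorem nonneg (hF : SolvesShuffleEquation n F) (w : List (Fin (n + 1))) : 0 ≤ F w := by
  induction hw : w.length using Nat.strong_induction_on generalizing w with
  | _ m ih =>
    rw [hF w]
    refine add_nonneg (by positivity) (sum_nonneg fun i _ => mul_nonneg (by positivity) ?_)
    split_ifs with hlast
    · have hm : 0 < m := hw ▸ List.length_pos_iff.mpr (by rintro rfl; simp at hlast)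
      refine shufflePowCoeff_nonneg (m := m - 1) (fun u hu => ih u.length (by omega) u rfl) _ ?_
      simp [hw]
    · rfl

theorem sum_append_singleton (hF : SolvesShuffleEquation n F) :
    (fun w => ∑ a, F (w ++ [a])) = ∑ i : Fin (n + 1), (n.choose i : ℝ) • shufflePowCoeff F i := by
  ext w
  simp only [hF (w ++ _), List.getLast?_concat, List.dropLast_concat, Option.some_inj]
  rw [sum_add_distrib, Finset.sum_apply, sum_comm,
    ← add_sum_erase _ (fun i : Fin (n + 1) => ((n.choose i : ℝ) • shufflePowCoeff F i) w)
      (mem_univ 0)]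
  congr 1
  · simp [shufflePowCoeff, List.append_eq_singleton_iff, ite_and]
  · refine sum_congr rfl fun i _ => ?_
    simp [mul_ite]

theorem derivative_one_add_wordEgf (hF : SolvesShuffleEquation n F) :
    d⁄dX ℝ (1 + wordEgf F) = (1 + wordEgf F) ^ n := by
  rw [map_add, derivative_one, zero_add, derivative_wordEgf', hF.sum_append_singleton, map_sum,
    add_comm 1, add_pow,
    ← Fin.sum_univ_eq_sum_range fun m => wordEgf F ^ m * 1 ^ (n - m) * (n.choose m : ℝ⟦X⟧)]
  refine sum_congr rfl fun i _ => ?_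
  rw [map_smul, wordEgf_shufflePowCoeff, one_pow, mul_one, mul_comm, ← nsmul_eq_mul,
    Nat.cast_smul_eq_nsmul]

theorem wordSum_eq_prod (hF : SolvesShuffleEquation n F) {k : ℕ} (hk : k ≠ 0) :
    wordSum F k = ∏ j ∈ range k, (((n : ℝ) - 1) * j + 1) := by
  have hconst : constantCoeff (1 + wordEgf F) = 1 := by
    rw [map_add, constantCoeff_wordEgf, hF.apply_nil, map_one, add_zero]
  have := factorial_mul_coeff_pow_of_derivative_eq_pow hconst hF.derivative_one_add_wordEgf 1 k
  rw [pow_one, map_add, coeff_one, if_neg hk, zero_add, coeff_wordEgf, Nat.cast_one] at this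
  rw [← this]
  field_simp

end SolvesShuffleEquation

/-- If `F` is the solution of `F = a_0 + ∑_{i=1}^n C(n,i)·F^{⧢ i}·a_i` on the alphabet
`Fin (n+1)`, then the total coefficient mass of its degree-`k` homogeneous part
`‖F_k‖ = ∑_{|w| = k} |⟨F,w⟩|` equals `∏_{j=0}^{k-1}((n-1)j+1)` for `k ≥ 1`, `‖F_1‖ = 1`,
`‖F_0‖ = 0`; in particular `‖F_k‖ = k!` for `n = 2` and `‖F_k‖ = (2k-1)!!` for `n = 3`. -/
theorem stmt10 (n : ℕ) (F : List (Fin (n + 1)) → ℝ)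
    (hF : ∀ w : List (Fin (n + 1)),
      F w = (if w = [(0 : Fin (n + 1))] then 1 else 0) +
        ∑ i ∈ Finset.univ.erase (0 : Fin (n + 1)),
          (n.choose i.val : ℝ) *
            (if w.getLast? = some i then shufflePowCoeff F i.val w.dropLast else 0)) :
    (∑ f : Fin 0 → Fin (n + 1), |F (List.ofFn f)|) = 0 ∧
    (∑ f : Fin 1 → Fin (n + 1), |F (List.ofFn f)|) = 1 ∧
    (∀ k : ℕ, 1 ≤ k →
      (∑ f : Fin k → Fin (n + 1), |F (List.ofFn f)|)
        = ∏ j ∈ Finset.range k, (((n : ℝ) - 1) * j + 1)) ∧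
    (n = 2 → ∀ k : ℕ, 1 ≤ k →
      (∑ f : Fin k → Fin (n + 1), |F (List.ofFn f)|) = (k.factorial : ℝ)) ∧
    (n = 3 → ∀ k : ℕ, 1 ≤ k →
      (∑ f : Fin k → Fin (n + 1), |F (List.ofFn f)|) = ((2 * k - 1).doubleFactorial : ℝ)) := by
  have hsol : SolvesShuffleEquation n F := hF
  have hmass (k : ℕ) (hk : 1 ≤ k) :
      (∑ f : Fin k → Fin (n + 1), |F (List.ofFn f)|) =
        ∏ j ∈ Finset.range k, (((n : ℝ) - 1) * j + 1) := by
    simp_rw [abs_of_nonneg (hsol.nonneg _)]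
    exact hsol.wordSum_eq_prod (by omega)
  refine ⟨by simp [hsol.apply_nil], by simpa using hmass 1 le_rfl, hmass, ?_, ?_⟩
  · rintro rfl k hk
    rw [hmass k hk, ← prod_range_add_one_eq_factorial]
    push_cast
    ring_nf
  · rintro rfl k hk
    rw [hmass k hk, ← Nat.prod_range_two_mul_add_one]
    push_cast
    ring_nf
end

section
/- Let X_i = x^i ∂/∂x be vector fields on ℝ for i ∈ ℕ. For any word v = a_{i_1}···a_{i_k} with k ≥ 2, the composed differential operator satisfies, modulo terms involving ∂²/∂x² and higher, X_{i_1}∘···∘X_{i_k} = i_k(i_k+i_{k−1}−1)(i_k+i_{k−1}+i_{k−2}−2)···(i_k+···+i_2−k+2)·x^{i_1+···+i_k−k+1}·∂/∂x. -/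
/-- The vector field `X_i = x^i ∂/∂x` as a first-order differential operator. -/
noncomputable def Xop (i : ℕ) (f : ℝ → ℝ) : ℝ → ℝ := fun x => x ^ i * deriv f x

/-- The composition `X_{i_1} ∘ ⋯ ∘ X_{i_k}` of the operators along a word
`[i_1, …, i_k]` (the head `i_1` is applied last, i.e. outermost). -/
noncomputable def Xcomp : List ℕ → (ℝ → ℝ) → (ℝ → ℝ)
  | [], f => f
  | i :: is, f => Xop i (Xcomp is f)

lemma key17 (is : List ℕ) (hne : is ≠ []) (a b : ℝ) : ∀ x : ℝ, x ≠ 0 →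
    Xcomp is (fun y => a + b * y) x =
      (∏ t ∈ Finset.range (is.length - 1),
        (((is.drop (t + 1)).sum : ℝ) - ((is.length : ℝ) - (t : ℝ) - 2))) *
        x ^ ((is.sum : ℤ) - (is.length : ℤ) + 1) * b := by
  induction is with
  | nil => exact absurd rfl hne
  | cons i is' IH =>
    intro x hx
    cases is' with
    | nil =>
      have hb : HasDerivAt (fun y : ℝ => a + b * y) b x := by
        simpa using (((hasDerivAt_id x).const_mul b).const_add a)
      have step : Xcomp [i] (fun y => a + b * y) x
          = x ^ i * deriv (fun y => a + b * y) x := rfl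
      rw [step, hb.deriv]
      simp only [List.length_cons, List.length_nil, List.sum_cons, List.sum_nil]
      rw [show ((i + 0 : ℕ) : ℤ) - ((0 + 1 : ℕ) : ℤ) + 1 = (i : ℤ) by push_cast; ring,
        zpow_natCast]
      simp
    | cons j rest =>
      have hne' : (j :: rest) ≠ [] := by simp
      set is' := j :: rest with his'
      set c : ℝ := ∏ t ∈ Finset.range (is'.length - 1),
        (((is'.drop (t + 1)).sum : ℝ) - ((is'.length : ℝ) - (t : ℝ) - 2)) with hc
      set e : ℤ := (is'.sum : ℤ) - (is'.length : ℤ) + 1 with he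
      have heq : Xcomp is' (fun y => a + b * y) =ᶠ[nhds x] fun y => (c * b) * y ^ e := by
        filter_upwards [eventually_ne_nhds hx] with y hy
        rw [IH hne' y hy]; ring
      have hd : deriv (Xcomp is' (fun y => a + b * y)) x = (c * b) * ((e : ℝ) * x ^ (e - 1)) := by
        rw [heq.deriv_eq, deriv_const_mul _ (differentiableAt_zpow.2 (Or.inl hx)), deriv_zpow]
      have step : Xcomp (i :: is') (fun y => a + b * y) x
          = x ^ i * deriv (Xcomp is' (fun y => a + b * y)) x := rfl
      rw [step, hd]
      have hlen : (i :: is').length - 1 = (is'.length - 1) + 1 := by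
        simp [his']
      have hprod : (∏ t ∈ Finset.range ((i :: is').length - 1),
          ((((i :: is').drop (t + 1)).sum : ℝ) - (((i :: is').length : ℝ) - (t : ℝ) - 2)))
          = c * (e : ℝ) := by
        rw [hlen, Finset.prod_range_succ']
        have h0 : (((i :: is').drop (0 + 1)).sum : ℝ) - (((i :: is').length : ℝ) - ((0:ℕ) : ℝ) - 2)
            = (e : ℝ) := by
          have hdrop : ((i :: is').drop (0 + 1)) = is' := rfl
          rw [hdrop, he, List.length_cons]
          push_cast
          simp only [List.map_map, Function.comp_def, Int.cast_natCast]
          ring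
        rw [h0]
        congr 1
        apply Finset.prod_congr rfl
        intro t ht
        have hdrop : (i :: is').drop (t + 1 + 1) = is'.drop (t + 1) := rfl
        rw [hdrop, List.length_cons]
        push_cast
        ring
      rw [hprod]
      have hexp : (((i :: is').sum : ℤ) - (((i :: is').length : ℤ)) + 1)
          = (i : ℤ) + (e - 1) := by
        rw [he]
        simp only [List.sum_cons, List.length_cons]
        push_cast
        ring
      rw [hexp, zpow_add₀ hx, zpow_natCast]
      ring

/-- For `k ≥ 2` and `v = a_{i_1}⋯a_{i_k}`, modulo `∂²/∂x²` one has
`X_{i_1}∘⋯∘X_{i_k} = i_k(i_k+i_{k-1}-1)⋯(i_k+⋯+i_2-k+2) · x^{i_1+⋯+i_k-k+1} · ∂/∂x`: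
equivalently, applied to an arbitrary affine function `y ↦ a + b·y` (on which all the
second- and higher-order terms vanish) the composition gives exactly this first-order
part.  The factor for `j ∈ {2,…,k}` (here `j = t+2`) is `(i_j+⋯+i_k) - (k-j)`. -/
theorem stmt17 (is : List ℕ) (hk : 2 ≤ is.length) (a b x : ℝ) (hx : x ≠ 0) :
    Xcomp is (fun y => a + b * y) x =
      (∏ t ∈ Finset.range (is.length - 1),
        (((is.drop (t + 1)).sum : ℝ) - ((is.length : ℝ) - (t : ℝ) - 2))) *
        x ^ ((is.sum : ℤ) - (is.length : ℤ) + 1) * b := by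
  apply key17 is (by rintro rfl; simp at hk) a b x hx
end

section
/- In consequence of the previous operator computation: for v = a_{i_1}···a_{i_k}, the evaluation X_{i_1}···X_{i_k}(h)(0) of the composed operators on the identity function h(x)=x at x=0 is nonzero only if i_1 + ··· + i_k = k − 1, in which case it equals i_k(i_k+i_{k−1}−1)···(i_k+···+i_2−k+2), provided all partial sums i_k+···+i_{j}−(k−j) are nonnegative. -/
open Finset

-- The truncated subtraction is harmless: when the exponent of `w` is `0` the coefficient vanishes.
def wordExponent : List ℕ → ℕ
  | [] => 1
  | i :: w => i + wordExponent w - 1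

def wordCoeff : List ℕ → ℕ
  | [] => 1
  | _ :: w => wordCoeff w * wordExponent w

lemma Xop_monomial (i m : ℕ) (c : ℝ) :
    Xop i (fun x => c * x ^ m) = fun x => c * m * x ^ (i + m - 1) := by
  funext x
  simp only [Xop, deriv_const_mul_field', deriv_pow_field]
  rcases m with _ | m
  · simp
  · rw [Nat.add_sub_cancel, Nat.add_sub_assoc (by omega), Nat.add_sub_cancel, pow_add]
    ring

lemma Xcomp_id_eq_monomial (w : List ℕ) :
    Xcomp w (fun y => y) = fun x => (wordCoeff w : ℝ) * x ^ wordExponent w := by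
  induction w with
  | nil => funext x; simp [Xcomp, wordCoeff, wordExponent]
  | cons i w ih =>
    rw [Xcomp, ih, Xop_monomial, wordCoeff, wordExponent, Nat.cast_mul]

lemma wordCoeff_eq_prod (w : List ℕ) :
    wordCoeff w = ∏ t ∈ range (w.length - 1), wordExponent (w.drop (t + 1)) := by
  induction w with
  | nil => rfl
  | cons i w ih =>
    rcases w with _ | ⟨j, w⟩
    · rfl
    · rw [wordCoeff, ih]
      simp [prod_range_succ']

lemma wordExponent_add_length_of_wordCoeff_ne_zero {w : List ℕ} (h : wordCoeff w ≠ 0) :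
    wordExponent w + w.length = w.sum + 1 := by
  induction w with
  | nil => rfl
  | cons i w ih =>
    rw [wordCoeff, mul_ne_zero_iff] at h
    have := ih h.1
    simp only [wordExponent, List.length_cons, List.sum_cons]
    omega

/-- The suffix-sum inequalities `i_j + ⋯ + i_k ≥ k - j` defining `M_0(k)`, with the suffix
`[i_j, …, i_k]` written `w.drop (j - 1)`. -/
def Admissible (w : List ℕ) : Prop :=
  ∀ t, (w.drop t).length ≤ (w.drop t).sum + 1

namespace Admissible

variable {w : List ℕ}

lemma drop (h : Admissible w) (n : ℕ) : Admissible (w.drop n) := fun t => by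
  rw [List.drop_drop]
  exact h (n + t)

lemma wordExponent_add_length (h : Admissible w) : wordExponent w + w.length = w.sum + 1 := by
  induction w with
  | nil => rfl
  | cons i w ih =>
    have hw := ih (by simpa using h.drop 1)
    have hhead := h 0
    simp only [List.drop_zero, List.length_cons, List.sum_cons] at hhead
    simp only [wordExponent, List.length_cons, List.sum_cons]
    omega

lemma wordExponent_eq (h : Admissible w) :
    (wordExponent w : ℝ) = w.sum + 1 - w.length := by
  have : (wordExponent w : ℝ) + w.length = w.sum + 1 := by
    exact_mod_cast h.wordExponent_add_length
  linarith

lemma wordCoeff_eq_prod (h : Admissible w) :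
    (wordCoeff w : ℝ) = ∏ t ∈ range (w.length - 1),
      (((w.drop (t + 1)).sum : ℝ) - ((w.length : ℝ) - t - 2)) := by
  rw [_root_.wordCoeff_eq_prod, Nat.cast_prod]
  refine prod_congr rfl fun t ht => ?_
  rw [(h.drop (t + 1)).wordExponent_eq, List.length_drop,
    Nat.cast_sub (by rw [mem_range] at ht; omega)]
  push_cast
  ring

end Admissible

/-- For `v = a_{i_1}⋯a_{i_k}` and `h(x) = x`: the evaluation `X_v(h)(0)` is nonzero only if
`i_1 + ⋯ + i_k = k - 1`, in which case—provided all partial suffix sums satisfy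
`i_j + ⋯ + i_k - (k - j) ≥ 0`—it equals
`i_k(i_k+i_{k-1}-1)⋯(i_k+⋯+i_2-k+2)` (the factor for `j = t+2` being
`(i_j+⋯+i_k) - (k-j)`). -/
theorem stmt18 (is : List ℕ) (hk : 2 ≤ is.length) :
    (Xcomp is (fun y => y) 0 ≠ 0 → is.sum = is.length - 1) ∧
    (is.sum = is.length - 1 →
      (∀ t ∈ Finset.range (is.length - 1), is.length ≤ (is.drop (t + 1)).sum + t + 2) →
      Xcomp is (fun y => y) 0 =
        ∏ t ∈ Finset.range (is.length - 1),
          (((is.drop (t + 1)).sum : ℝ) - ((is.length : ℝ) - (t : ℝ) - 2))) := by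
  rw [Xcomp_id_eq_monomial]
  refine ⟨fun hne => ?_, fun hsum hsuffix => ?_⟩
  · have hexp : wordExponent is = 0 := by
      by_contra h
      simp [zero_pow h] at hne
    have hcoeff : wordCoeff is ≠ 0 := by
      rintro h
      simp [h] at hne
    have := wordExponent_add_length_of_wordCoeff_ne_zero hcoeff
    omega
  · have hadm : Admissible is := by
      intro t
      rw [List.length_drop]
      rcases t with _ | t
      · simp only [List.drop_zero]
        omega
      · by_cases ht : t < is.length - 1
        · have := hsuffix t (mem_range.2 ht)
          omega
        · omega
    have hexp : wordExponent is = 0 := by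
      have := hadm.wordExponent_add_length
      omega
    simpa [hexp] using hadm.wordCoeff_eq_prod
end
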